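/- arXiv:1904.03881 — 3 statements merged into one kernel-verified Lean document; each statement's English description precedes it below -/
import Mathlib

section
/- With P_n and A_d as defined (P_0 = 1, P_1 = 1 + x, P_{n+2} = P_{n+1} + x·P_n; A_d(x^k) = x·A_{d-1}(x^{k-1}) for k>0, A_0(1) = 1+2x, A_d(1) = P_{2d+1} − A_d(P_{2d-1} − 1)), we have A_d(P_{2d}) = P_{2d+2} for all d ≥ 1. -/
open Polynomial

noncomputable def P : ℕ → Polynomial ℤ
  | 0 => 1
  | 1 => 1 + Polynomial.X
  | n + 2 => P (n + 1) + Polynomial.X * P n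

/-- `Amon d k` is the value of the linear map `A_d` on the monomial `x^k`. -/
noncomputable def Amon : ℕ → ℕ → Polynomial ℤ
  | 0, 0 => 1 + 2 * Polynomial.X
  | 0, _ + 1 => 0
  | d + 1, k + 1 => Polynomial.X * Amon d k
  | d + 1, 0 =>
      P (2 * d + 3) -
        ∑ k ∈ Finset.range (d + 1),
          Polynomial.C ((P (2 * d + 1)).coeff (k + 1)) * (Polynomial.X * Amon d k)

/-- The linear map `A_d` applied to a polynomial of degree at most `d`. -/
noncomputable def Aap (d : ℕ) (p : Polynomial ℤ) : Polynomial ℤ :=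
  ∑ k ∈ Finset.range (d + 1), Polynomial.C (p.coeff k) * Amon d k

/-!
Split off the constant term: `A_{d+1} p = p(0) · A_{d+1}(1) + x · A_d (p / x)`, where `p / x`
drops the constant term. Since `P_{2d+2} / x = P_{2d+1} / x + P_{2d}` and `A_{d+1}(1)` is defined
precisely so that `A_{d+1}(1) + x · A_d (P_{2d+1} / x) = P_{2d+3}`, this gives
`A_{d+1}(P_{2d+2}) = P_{2d+3} + x · A_d(P_{2d})`, and induction on `d` concludes via the recurrence.
-/

lemma P_add_two (n : ℕ) : P (n + 2) = P (n + 1) + X * P n := rfl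

lemma P_coeff_zero : ∀ n, (P n).coeff 0 = 1
  | 0 => by simp [P]
  | 1 => by simp [P]
  | n + 2 => by simp [P_add_two, P_coeff_zero (n + 1)]

lemma divX_X_mul {R : Type*} [Semiring R] (p : R[X]) : divX (X * p) = p := by
  ext n
  rw [coeff_divX, coeff_X_mul]

lemma divX_P_add_two (n : ℕ) : divX (P (n + 2)) = divX (P (n + 1)) + P n := by
  rw [P_add_two, divX_add, divX_X_mul]

lemma Aap_add (d : ℕ) (p q : ℤ[X]) : Aap d (p + q) = Aap d p + Aap d q := by
  simp only [Aap, coeff_add, C_add, add_mul, Finset.sum_add_distrib]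

lemma Amon_succ_zero (d : ℕ) :
    Amon (d + 1) 0 = P (2 * d + 3) - X * Aap d (divX (P (2 * d + 1))) := by
  simp only [Amon, Aap, coeff_divX, Finset.mul_sum, mul_left_comm X]

lemma Aap_succ (d : ℕ) (p : ℤ[X]) :
    Aap (d + 1) p = C (p.coeff 0) * Amon (d + 1) 0 + X * Aap d (divX p) := by
  rw [Aap, Finset.sum_range_succ', add_comm, Aap, Finset.mul_sum]
  congr 1
  refine Finset.sum_congr rfl fun k _ => ?_
  rw [coeff_divX, Amon, mul_left_comm]

lemma Aap_succ_P_even (d : ℕ) :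
    Aap (d + 1) (P (2 * d + 2)) = P (2 * d + 3) + X * Aap d (P (2 * d)) := by
  rw [Aap_succ, P_coeff_zero, C_1, one_mul, Amon_succ_zero, divX_P_add_two, Aap_add]
  ring

theorem A_P_even_general (d : ℕ) :
    Aap d (P (2 * d)) = P (2 * d + 2) := by
  induction d with
  | zero =>
    rw [Aap, Finset.sum_range_one, P_coeff_zero, C_1, one_mul, Amon, P_add_two]
    simp only [P]
    ring
  | succ d ih =>
    rw [mul_add_one, Aap_succ_P_even, ih, P_add_two (2 * d + 2)]

theorem A_P_even (d : ℕ) (hd : 1 ≤ d) :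
    Aap d (P (2 * d)) = P (2 * d + 2) :=
  A_P_even_general d
end

section
/- With A_d as defined, for all d ≥ k ≥ 1: A_d(x^k) = x^k · A_{d-k}(1), and hence A_d(x^k) = x^k·(1 + 2x − x² + 2x³ − ⋯ + (−1)^{d−k}·Cat(d−k)·x^{d−k+1}). -/
open Polynomial

/-!
In `ℤ⟦X⟧` let `c = ∑ (-1)^m Cat(m) X^m`, so that `c = 1 - X c²`, and `μ = -X c` (`fibRoot`); then
`μ² = μ + X`, i.e. `μ` is the root of the characteristic equation of `P` lying in `X ℤ⟦X⟧`,
and a two-step induction gives `P (m + 2) = P m * (1 + X - μ) + μ ^ (m + 2)`. The series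
`1 + X - μ = 1 + X + X c` truncates to the polynomials `1 + 2x - x² + 2x³ - ⋯` of the statement.
As `deg P m ≤ (m + 1) / 2` and `X ^ (m + 2) ∣ μ ^ (m + 2)`, truncating this identity just above
`deg P (m + 2)` expresses `P (m + 2)` through the truncations of `1 + X - μ`; for `m = 2d + 1`
this is precisely the recursion defining `A_{d+1}(1)`.
-/

open PowerSeries (trunc catalanSeries rescale)
open scoped PowerSeries

noncomputable def signedCatalanSeries : ℤ⟦X⟧ :=
  rescale (-1) (PowerSeries.map (Nat.castRingHom ℤ) catalanSeries)

lemma coeff_signedCatalanSeries (n : ℕ) :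
    PowerSeries.coeff n signedCatalanSeries = (-1) ^ n * (catalan n : ℤ) := by
  simp [signedCatalanSeries, PowerSeries.coeff_rescale]

lemma signedCatalanSeries_eq :
    signedCatalanSeries = 1 - PowerSeries.X * signedCatalanSeries ^ 2 := by
  have h := congrArg (fun f => rescale (-1) (PowerSeries.map (Nat.castRingHom ℤ) f))
    PowerSeries.catalanSeries_sq_mul_X_add_one
  simp only [map_add, map_mul, map_pow, map_one, PowerSeries.map_X, PowerSeries.rescale_X,
    map_neg] at h
  rw [signedCatalanSeries]
  linear_combination -h

noncomputable def fibRoot : ℤ⟦X⟧ := -PowerSeries.X * signedCatalanSeries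

lemma fibRoot_sq : fibRoot ^ 2 = fibRoot + PowerSeries.X := by
  rw [fibRoot]
  linear_combination PowerSeries.X * signedCatalanSeries_eq

lemma coe_P_add_two (n : ℕ) :
    (P (n + 2) : ℤ⟦X⟧) = (P (n + 1) : ℤ⟦X⟧) + PowerSeries.X * (P n : ℤ⟦X⟧) := by
  simp [P]

lemma P_add_two_eq (m : ℕ) :
    (P (m + 2) : ℤ⟦X⟧) =
      (P m : ℤ⟦X⟧) * (1 + PowerSeries.X - fibRoot) + fibRoot ^ (m + 2) := by
  induction m using P.induct with
  | case1 =>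
    simp only [P]
    push_cast
    linear_combination -fibRoot_sq
  | case2 =>
    simp only [P]
    push_cast
    linear_combination -(fibRoot + 1) * fibRoot_sq
  | case3 n ih₁ ih₀ =>
    have h₂ := coe_P_add_two (n + 2)
    have h₀ := coe_P_add_two n
    simp only [Nat.succ_eq_add_one, add_assoc, Nat.reduceAdd] at ih₁ ih₀ h₂ h₀ ⊢
    linear_combination h₂ + ih₁ + PowerSeries.X * ih₀
      - (1 + PowerSeries.X - fibRoot) * h₀ - fibRoot ^ (n + 2) * fibRoot_sq

lemma natDegree_P_le (m : ℕ) : (P m).natDegree ≤ (m + 1) / 2 := by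
  induction m using P.induct with
  | case1 => simp [P]
  | case2 => simp only [P]; compute_degree!
  | case3 n ih₁ ih₀ =>
    rw [P]
    refine (Polynomial.natDegree_add_le _ _).trans (max_le (ih₁.trans (by omega)) ?_)
    refine Polynomial.natDegree_mul_le.trans ?_
    have := Polynomial.natDegree_X_le (R := ℤ)
    omega

lemma coeff_P_zero (m : ℕ) : (P m).coeff 0 = 1 := by
  induction m using P.induct with
  | case1 => simp [P]
  | case2 => simp [P]
  | case3 n ih _ => simp [P, ih]

lemma trunc_X_pow_mul {R : Type*} [Semiring R] (f : R⟦X⟧) {j K : ℕ} (h : j ≤ K) :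
    trunc K (PowerSeries.X ^ j * f) = Polynomial.X ^ j * trunc (K - j) f := by
  ext n
  simp only [PowerSeries.coeff_trunc, Polynomial.coeff_X_pow_mul', PowerSeries.coeff_X_pow_mul']
  split_ifs <;> first | rfl | omega

lemma trunc_mul_eq_sum {R : Type*} [CommSemiring R] (p : R[X]) (f : R⟦X⟧) {n K : ℕ}
    (hp : p.natDegree < n) (hnK : n ≤ K + 1) :
    trunc K ((p : R⟦X⟧) * f) =
      ∑ j ∈ Finset.range n, Polynomial.C (p.coeff j) * Polynomial.X ^ j * trunc (K - j) f := by
  conv_lhs => rw [p.as_sum_range_C_mul_X_pow' hp, ← Polynomial.coeToPowerSeries.ringHom_apply,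
    map_sum, Finset.sum_mul, map_sum]
  refine Finset.sum_congr rfl fun j hj => ?_
  rw [Polynomial.coeToPowerSeries.ringHom_apply, Polynomial.coe_mul, Polynomial.coe_C,
    Polynomial.coe_pow, Polynomial.coe_X, mul_assoc, PowerSeries.trunc_C_mul,
    trunc_X_pow_mul f (by have := Finset.mem_range.mp hj; omega), mul_assoc]

lemma trunc_one_add_X_sub_fibRoot (n : ℕ) :
    trunc (n + 2) (1 + PowerSeries.X - fibRoot) =
      1 + Polynomial.X + ∑ m ∈ Finset.range (n + 1),
        Polynomial.C ((-1) ^ m * (catalan m : ℤ)) * Polynomial.X ^ (m + 1) := by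
  have h := trunc_X_pow_mul signedCatalanSeries (j := 1) (K := n + 2) (by omega)
  rw [pow_one, pow_one] at h
  rw [fibRoot, sub_eq_add_neg, neg_mul, neg_neg, map_add, map_add, h, PowerSeries.trunc_one,
    PowerSeries.trunc_X, PowerSeries.trunc_apply, Finset.mul_sum]
  simp only [Nat.Ico_zero_eq_range, coeff_signedCatalanSeries,
    ← Polynomial.C_mul_X_pow_eq_monomial, pow_succ]
  congr 1
  refine Finset.sum_congr rfl fun m _ => by ring

lemma P_add_two_eq_sum (m : ℕ) :
    P (m + 2) = ∑ j ∈ Finset.range ((m + 1) / 2 + 1),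
      Polynomial.C ((P m).coeff j) * Polynomial.X ^ j *
        trunc ((m + 1) / 2 + 2 - j) (1 + PowerSeries.X - fibRoot) := by
  set N := (m + 1) / 2
  have hdeg : (P (m + 2)).natDegree < N + 2 := (natDegree_P_le _).trans_lt (by omega)
  have hroot : trunc (N + 2) (fibRoot ^ (m + 2)) = 0 := by
    obtain ⟨e, he⟩ : ∃ e, m + 2 = N + 2 + e := ⟨m - N, by omega⟩
    rw [he, fibRoot, show (-PowerSeries.X * signedCatalanSeries) ^ (N + 2 + e) =
      PowerSeries.X ^ (N + 2) * (PowerSeries.X ^ e * (-signedCatalanSeries) ^ (N + 2 + e)) by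
        ring]
    exact PowerSeries.trunc_X_pow_self_mul _ _
  calc P (m + 2) = trunc (N + 2) (P (m + 2) : ℤ⟦X⟧) := (PowerSeries.trunc_coe_eq_self hdeg).symm
    _ = trunc (N + 2) ((P m : ℤ⟦X⟧) * (1 + PowerSeries.X - fibRoot)) := by
      rw [P_add_two_eq, map_add, hroot, add_zero]
    _ = _ := trunc_mul_eq_sum _ _ ((natDegree_P_le m).trans_lt (by omega)) (by omega)

lemma Amon_eq_X_pow_mul {d k : ℕ} (h : k ≤ d) : Amon d k = Polynomial.X ^ k * Amon (d - k) 0 := by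
  induction k generalizing d with
  | zero => simp
  | succ k ih =>
    obtain ⟨e, rfl⟩ : ∃ e, d = e + 1 := ⟨d - 1, by omega⟩
    rw [Amon, ih (by omega), Nat.add_sub_add_right, pow_succ']
    ring

lemma Amon_zero_eq_trunc (n : ℕ) : Amon n 0 = trunc (n + 2) (1 + PowerSeries.X - fibRoot) := by
  induction n using Nat.strong_induction_on with
  | _ n ih =>
    rcases n with _ | d
    · rw [trunc_one_add_X_sub_fibRoot, Amon]
      simp [two_mul, add_assoc]
    have hsum : ∀ k ∈ Finset.range (d + 1),
        Polynomial.C ((P (2 * d + 1)).coeff (k + 1)) * (Polynomial.X * Amon d k) =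
          Polynomial.C ((P (2 * d + 1)).coeff (k + 1)) * Polynomial.X ^ (k + 1) *
            trunc (d + 1 + 2 - (k + 1)) (1 + PowerSeries.X - fibRoot) := by
      intro k hk
      rw [Finset.mem_range] at hk
      rw [Amon_eq_X_pow_mul (by omega), ih (d - k) (by omega),
        show d + 1 + 2 - (k + 1) = d - k + 2 by omega]
      ring
    rw [Amon, Finset.sum_congr rfl hsum, P_add_two_eq_sum (2 * d + 1),
      show (2 * d + 1 + 1) / 2 = d + 1 by omega, Finset.sum_range_succ', coeff_P_zero]
    simp

theorem A_monomial_general (d k : ℕ) (hkd : k ≤ d) :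
    Amon d k = Polynomial.X ^ k * Amon (d - k) 0 ∧
    Amon d k = Polynomial.X ^ k *
      (1 + Polynomial.X + ∑ m ∈ Finset.range (d - k + 1),
        Polynomial.C ((-1) ^ m * (catalan m : ℤ)) * Polynomial.X ^ (m + 1)) := by
  rw [← trunc_one_add_X_sub_fibRoot, ← Amon_zero_eq_trunc]
  exact ⟨Amon_eq_X_pow_mul hkd, Amon_eq_X_pow_mul hkd⟩

theorem A_monomial (d k : ℕ) (hk : 1 ≤ k) (hkd : k ≤ d) :
    Amon d k = Polynomial.X ^ k * Amon (d - k) 0 ∧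
    Amon d k = Polynomial.X ^ k *
      (1 + Polynomial.X + ∑ m ∈ Finset.range (d - k + 1),
        Polynomial.C ((-1) ^ m * (catalan m : ℤ)) * Polynomial.X ^ (m + 1)) :=
  A_monomial_general d k hkd
end

section
/- Define the doubly-indexed polynomials P_{n,i} for 1 ≤ i ≤ n by P_{n,1}-type boundary values P_{2d-1,1} = P_{2d-1} + x·P_{2d-3} and P_{2d-1,2} = P_{2d-1} + x·P_{2d-4}, together with recurrences P_{n+2,i} = P_{n+1,i} + x·P_{n,i} and P_{n+2,i} = P_{n+1,i-1} + x·P_{n,i-2}. Then for all d ≥ 2: P_{2d+1,d} − P_{2d+1,d-1} = (−1)^{d+1}·(x^{d+1} + x^d). -/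
open Polynomial

/-!
Subtracting the two recurrences, `Q (n+2) (i+3) = Q (n+1) (i+2) + x Q n (i+1)` and
`Q (n+2) (i+2) = Q (n+1) (i+2) + x Q n (i+2)`, cancels the `Q (n+1)` terms: the difference of
neighbouring entries is multiplied by `-x` each time one moves two rows down and one column
right. Along the diagonal `(2d+1, d)` this gives `(-x)^(d-2)` times the difference at `d = 2`,
which the boundary values make equal to `x (P 2 - P 3) = -x² P 1 = -(x³ + x²)`.
-/

section Recurrences

variable {R : Type*} [CommRing R] {a : R} {Q : ℕ → ℕ → R}

theorem sub_succ_eq_neg_mul_sub (h1 : ∀ n i : ℕ, Q (n + 2) i = Q (n + 1) i + a * Q n i)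
    (h2 : ∀ n i : ℕ, 3 ≤ i → Q (n + 2) i = Q (n + 1) (i - 1) + a * Q n (i - 2)) (n i : ℕ) :
    Q (n + 2) (i + 3) - Q (n + 2) (i + 2) = -a * (Q n (i + 2) - Q n (i + 1)) := by
  have h2' : Q (n + 2) (i + 3) = Q (n + 1) (i + 2) + a * Q n (i + 1) := h2 n (i + 3) le_add_self
  linear_combination h2' - h1 n (i + 2)

theorem diag_sub_eq_neg_pow_mul (h1 : ∀ n i : ℕ, Q (n + 2) i = Q (n + 1) i + a * Q n i)
    (h2 : ∀ n i : ℕ, 3 ≤ i → Q (n + 2) i = Q (n + 1) (i - 1) + a * Q n (i - 2)) (k : ℕ) :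
    Q (2 * k + 5) (k + 2) - Q (2 * k + 5) (k + 1) = (-a) ^ k * (Q 5 2 - Q 5 1) := by
  induction k with
  | zero => simp
  | succ k ih =>
    rw [pow_succ', mul_assoc, ← ih]
    exact sub_succ_eq_neg_mul_sub h1 h2 (2 * k + 5) k

end Recurrences

theorem top_difference (Q : ℕ → ℕ → Polynomial ℤ)
    (h1 : ∀ n i : ℕ, Q (n + 2) i = Q (n + 1) i + Polynomial.X * Q n i)
    (h2 : ∀ n i : ℕ, 3 ≤ i → Q (n + 2) i = Q (n + 1) (i - 1) + Polynomial.X * Q n (i - 2))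
    (h3 : ∀ d : ℕ, 2 ≤ d → Q (2 * d - 1) 1 = P (2 * d - 1) + Polynomial.X * P (2 * d - 3))
    (h4 : ∀ d : ℕ, 2 ≤ d → Q (2 * d - 1) 2 = P (2 * d - 1) + Polynomial.X * P (2 * d - 4)) :
    ∀ d : ℕ, 2 ≤ d →
      Q (2 * d + 1) d - Q (2 * d + 1) (d - 1) =
        (-1 : Polynomial ℤ) ^ (d + 1) * (Polynomial.X ^ (d + 1) + Polynomial.X ^ d) := by
  intro d hd
  obtain ⟨k, rfl⟩ := Nat.exists_eq_add_of_le' hd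
  have base : Q 5 2 - Q 5 1 = -(X ^ 3 + X ^ 2) := by
    rw [h4 3 le_add_self, h3 3 le_add_self]
    simp only [P]
    ring
  change Q (2 * k + 5) (k + 2) - Q (2 * k + 5) (k + 1) = _
  rw [diag_sub_eq_neg_pow_mul h1 h2 k, base]
  ring
end
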